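/- For all indices i ≠ j, the commutator of the Lauricella F_B operators is [ℓ_i^B, ℓ_j^B] = ℓ_i^B ∘ ℓ_j^B − ℓ_j^B ∘ ℓ_i^B = x_i(θ_i + a_i)(θ_i + b_i)θ_j − x_j(θ_j + a_j)(θ_j + b_j)θ_i, as ℂ-linear endomorphisms of ℂ[x_1,…,x_m]. -/
import Mathlib
set_option maxHeartbeats 1000000

open MvPolynomial

/-- The Euler operator `θ_i = x_i ∂_i` as a ℂ-linear endomorphism of `ℂ[x_1,…,x_m]`. -/
noncomputable def eulerOp {m : ℕ} (i : Fin m) :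
    Module.End ℂ (MvPolynomial (Fin m) ℂ) :=
  (LinearMap.mulLeft ℂ (X i)) ∘ₗ (pderiv i).toLinearMap

/-- Multiplication by `x_i` as a ℂ-linear endomorphism of `ℂ[x_1,…,x_m]`. -/
noncomputable def xMulOp {m : ℕ} (i : Fin m) :
    Module.End ℂ (MvPolynomial (Fin m) ℂ) :=
  LinearMap.mulLeft ℂ (X i)

/-- The Lauricella `F_B` operator
`ℓ_i^B = θ_i(θ_1 + ⋯ + θ_m + c − 1) − x_i(θ_i + a_i)(θ_i + b_i)`. -/
noncomputable def ellB {m : ℕ} (a b : Fin m → ℂ) (c : ℂ) (i : Fin m) :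
    Module.End ℂ (MvPolynomial (Fin m) ℂ) :=
  eulerOp i * ((∑ j, eulerOp j) + (c - 1) • 1) -
    xMulOp i * (eulerOp i + a i • 1) * (eulerOp i + b i • 1)

lemma pderiv_comm' {m : ℕ} (i j : Fin m) (p : MvPolynomial (Fin m) ℂ) :
    pderiv i (pderiv j p) = pderiv j (pderiv i p) := by
  induction p using MvPolynomial.induction_on with
  | C a => simp
  | add p q hp hq => simp [hp, hq]
  | mul_X p s ih =>
      simp [pderiv_mul, ih, Pi.single_apply, apply_ite (pderiv i), apply_ite (pderiv j)]
      ring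

lemma eulerOp_apply {m : ℕ} (i : Fin m) (p : MvPolynomial (Fin m) ℂ) :
    eulerOp i p = X i * pderiv i p := rfl

lemma xMulOp_apply {m : ℕ} (i : Fin m) (p : MvPolynomial (Fin m) ℂ) :
    xMulOp i p = X i * p := rfl

lemma euler_comm {m : ℕ} (i j : Fin m) : Commute (eulerOp i) (eulerOp j) := by
  refine LinearMap.ext fun p => ?_
  simp only [Module.End.mul_apply, eulerOp_apply, pderiv_mul, pderiv_X]
  rcases eq_or_ne i j with rfl | h
  · rfl
  · simp [Pi.single_eq_of_ne h, Pi.single_eq_of_ne (Ne.symm h), pderiv_comm' i j p]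
    ring

lemma xMul_comm {m : ℕ} (i j : Fin m) : Commute (xMulOp i) (xMulOp j) := by
  refine LinearMap.ext fun p => ?_
  simp only [Module.End.mul_apply, xMulOp_apply]
  ring

lemma euler_xMul_ne {m : ℕ} {i j : Fin m} (h : i ≠ j) : Commute (eulerOp i) (xMulOp j) := by
  refine LinearMap.ext fun p => ?_
  simp only [Module.End.mul_apply, eulerOp_apply, xMulOp_apply, pderiv_mul,
    pderiv_X_of_ne (Ne.symm h)]
  ring

lemma euler_xMul_self {m : ℕ} (i : Fin m) :
    eulerOp i * xMulOp i = xMulOp i * eulerOp i + xMulOp i := by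
  refine LinearMap.ext fun p => ?_
  simp only [Module.End.mul_apply, LinearMap.add_apply, eulerOp_apply, xMulOp_apply,
    pderiv_mul, pderiv_X_self]
  ring

lemma sum_euler_xMul {m : ℕ} (j : Fin m) :
    (∑ k, eulerOp k) * xMulOp j = xMulOp j * (∑ k, eulerOp k) + xMulOp j := by
  have h : ∀ k : Fin m, eulerOp k * xMulOp j =
      xMulOp j * eulerOp k + if k = j then xMulOp j else 0 := by
    intro k
    rcases eq_or_ne k j with rfl | h
    · simpa using euler_xMul_self k
    · simp [h, (euler_xMul_ne h).eq]
  rw [Finset.sum_mul, Finset.mul_sum]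
  simp_rw [h]
  rw [Finset.sum_add_distrib]
  simp

/-- Abstract key commutation computation in a ring. -/
lemma key_ring {R : Type*} [Ring R] (θi S xj u v : R)
    (hSx : S * xj = xj * S + xj)
    (hθx : θi * xj = xj * θi)
    (hθu : Commute θi u) (hθv : Commute θi v)
    (hSu : Commute S u) (hSv : Commute S v) :
    (θi * S) * (xj * u * v) = (xj * u * v) * (θi * S) + (xj * u * v) * θi := by
  have hc1 : Commute (θi * S) (u * v) :=
    (hθu.mul_right hθv).mul_left (hSu.mul_right hSv)
  have hc2 : Commute θi (u * v) := hθu.mul_right hθv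
  calc (θi * S) * (xj * u * v)
      = θi * (S * xj) * (u * v) := by noncomm_ring
    _ = θi * (xj * S + xj) * (u * v) := by rw [hSx]
    _ = (θi * xj) * (S * (u * v)) + (θi * xj) * (u * v) := by noncomm_ring
    _ = (xj * θi) * (S * (u * v)) + (xj * θi) * (u * v) := by rw [hθx]
    _ = xj * ((θi * S) * (u * v)) + xj * (θi * (u * v)) := by noncomm_ring
    _ = xj * ((u * v) * (θi * S)) + xj * ((u * v) * θi) := by rw [hc1.eq, hc2.eq]
    _ = (xj * u * v) * (θi * S) + (xj * u * v) * θi := by noncomm_ring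

/-- For `i ≠ j`, the commutator of the Lauricella `F_B` operators is
`[ℓ_i^B, ℓ_j^B] = x_i(θ_i + a_i)(θ_i + b_i)θ_j − x_j(θ_j + a_j)(θ_j + b_j)θ_i`. -/
theorem ellB_commutator {m : ℕ} (hm : 1 ≤ m) (a b : Fin m → ℂ) (c : ℂ)
    (i j : Fin m) (hij : i ≠ j) :
    ellB a b c i * ellB a b c j - ellB a b c j * ellB a b c i =
      xMulOp i * (eulerOp i + a i • 1) * (eulerOp i + b i • 1) * eulerOp j -
        xMulOp j * (eulerOp j + a j • 1) * (eulerOp j + b j • 1) * eulerOp i := by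
  classical
  simp only [ellB]
  set S : Module.End ℂ (MvPolynomial (Fin m) ℂ) :=
    (∑ k : Fin m, eulerOp k) + (c - 1) • 1 with hS
  have hθS : ∀ k : Fin m, Commute (eulerOp k) S := fun k =>
    (Commute.sum_right _ _ _ fun l _ => euler_comm k l).add_right
      ((Commute.one_right _).smul_right _)
  have hSx : ∀ k : Fin m, S * xMulOp k = xMulOp k * S + xMulOp k := by
    intro k
    rw [hS, add_mul, sum_euler_xMul, smul_mul_assoc, one_mul, mul_add, mul_smul_comm, mul_one]
    abel
  have hθu : ∀ (k l : Fin m) (r : ℂ), Commute (eulerOp k) (eulerOp l + r • 1) := fun k l r =>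
    (euler_comm k l).add_right ((Commute.one_right _).smul_right _)
  have hSu : ∀ (l : Fin m) (r : ℂ), Commute S (eulerOp l + r • 1) := fun l r =>
    (hθS l).symm.add_right ((Commute.one_right _).smul_right _)
  have hxu : ∀ {k l : Fin m}, k ≠ l → ∀ r : ℂ, Commute (xMulOp k) (eulerOp l + r • 1) :=
    fun h r => (euler_xMul_ne (Ne.symm h)).symm.add_right ((Commute.one_right _).smul_right _)
  have huu : ∀ (k l : Fin m) (r s : ℂ),
      Commute (eulerOp k + r • 1) (eulerOp l + s • 1) := fun k l r s =>
    (hθu k l s).add_left ((Commute.one_left _).smul_left _)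
  -- key rewrites
  have e1 : (eulerOp i * S) * (eulerOp j * S) = (eulerOp j * S) * (eulerOp i * S) :=
    (((euler_comm i j).mul_right (hθS i)).mul_left
      ((hθS j).symm.mul_right (Commute.refl S))).eq
  have hBcomm : Commute (xMulOp i * (eulerOp i + a i • 1) * (eulerOp i + b i • 1))
      (xMulOp j * (eulerOp j + a j • 1) * (eulerOp j + b j • 1)) := by
    have h1 : Commute (xMulOp i) (xMulOp j * (eulerOp j + a j • 1) * (eulerOp j + b j • 1)) :=
      (((xMul_comm i j).mul_right (hxu hij (a j))).mul_right (hxu hij (b j)))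
    have h2 : Commute (eulerOp i + a i • 1)
        (xMulOp j * (eulerOp j + a j • 1) * (eulerOp j + b j • 1)) :=
      ((hxu (Ne.symm hij) (a i)).symm.mul_right (huu i j (a i) (a j))).mul_right
        (huu i j (a i) (b j))
    have h3 : Commute (eulerOp i + b i • 1)
        (xMulOp j * (eulerOp j + a j • 1) * (eulerOp j + b j • 1)) :=
      ((hxu (Ne.symm hij) (b i)).symm.mul_right (huu i j (b i) (a j))).mul_right
        (huu i j (b i) (b j))
    exact (h1.mul_left h2).mul_left h3
  have e2 := hBcomm.eq
  have e3 : (eulerOp i * S) * (xMulOp j * (eulerOp j + a j • 1) * (eulerOp j + b j • 1)) =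
      (xMulOp j * (eulerOp j + a j • 1) * (eulerOp j + b j • 1)) * (eulerOp i * S) +
        (xMulOp j * (eulerOp j + a j • 1) * (eulerOp j + b j • 1)) * eulerOp i :=
    key_ring _ _ _ _ _ (hSx j) (euler_xMul_ne hij).eq (hθu i j (a j)) (hθu i j (b j))
      (hSu j (a j)) (hSu j (b j))
  have e4 : (eulerOp j * S) * (xMulOp i * (eulerOp i + a i • 1) * (eulerOp i + b i • 1)) =
      (xMulOp i * (eulerOp i + a i • 1) * (eulerOp i + b i • 1)) * (eulerOp j * S) +
        (xMulOp i * (eulerOp i + a i • 1) * (eulerOp i + b i • 1)) * eulerOp j :=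
    key_ring _ _ _ _ _ (hSx i) (euler_xMul_ne (Ne.symm hij)).eq (hθu j i (a i))
      (hθu j i (b i)) (hSu i (a i)) (hSu i (b i))
  rw [sub_mul, sub_mul, mul_sub, mul_sub, mul_sub, mul_sub, e1, e2, e3, e4]
  abel
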